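/- arXiv:2205.15354 — 3 statements merged into one kernel-verified Lean document; each statement's English description precedes it below -/
import Mathlib

section
/- Let ι be a finite index set with a distinguished root r and a parent map p : ι → ι such that p(r) = r and for every i ∈ ι there exists n ∈ ℕ with p^[n](i) = r (every element reaches the root under iteration of p). For i ≠ r let S_i = { j ∈ ι : j ≠ i and p^[n](j) = i for some n ≥ 1 } denote the set of strict descendants of i. Suppose σ : ι → ℝ takes only positive values and C : ι → ℝ satisfies, for every i ≠ r, the equation 0 = σ(p(i))·C(i) + (σ(p(i)) − σ(i))·Σ_{j ∈ S_i} C(j). Then C(i) = 0 for all i ≠ r. -/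
/-!
Order the regions by the strict-descendant relation of the parent map. Since the root is a fixed
point that every orbit reaches, no other point lies on a cycle, so this relation is transitive and
irreflexive, hence well-founded on a finite type. By well-founded induction, the charges of all
strict descendants of `i` vanish, so the equation for `i` reduces to `σ (p i) * C i = 0`, and
`σ (p i) > 0` gives `C i = 0`.
-/

open Function

open scoped Classical

theorem Function.IsPeriodicPt.eq_of_iterate_eq_isFixedPt {α : Type*} {f : α → α} {x r : α}
    {k N : ℕ} (hx : IsPeriodicPt f k x) (hk : 0 < k) (hr : IsFixedPt f r) (hN : f^[N] x = r) :
    x = r := by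
  calc x = f^[k * N] x := (hx.mul_const N).eq.symm
    _ = f^[k * N - N] (f^[N] x) := by
      rw [← iterate_add_apply, Nat.sub_add_cancel (Nat.le_mul_of_pos_left N hk)]
    _ = f^[k * N - N] r := by rw [hN]
    _ = r := (hr.iterate _).eq

section Descendants

variable {α : Type*} {p : α → α} {r : α}

def IsStrictDescendant (p : α → α) (j i : α) : Prop :=
  j ≠ i ∧ ∃ n, 1 ≤ n ∧ p^[n] j = i

theorem Function.IsFixedPt.not_isStrictDescendant (hr : IsFixedPt p r) (i : α) :
    ¬ IsStrictDescendant p r i := fun ⟨hri, _, _, hn⟩ => hri ((hr.iterate _).eq.symm.trans hn)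

theorem IsStrictDescendant.trans (hr : IsFixedPt p r) (hreach : ∀ i, ∃ n, p^[n] i = r)
    {k j i : α} (hkj : IsStrictDescendant p k j) (hji : IsStrictDescendant p j i) :
    IsStrictDescendant p k i := by
  obtain ⟨hkj, b, hb, hkj'⟩ := hkj
  obtain ⟨hji, a, ha, hji'⟩ := hji
  have hki : p^[a + b] k = i := by rw [iterate_add_apply, hkj', hji']
  refine ⟨?_, a + b, by omega, hki⟩
  rintro rfl
  -- `k` would lie on a cycle through `j`, but only the root lies on a cycle
  obtain ⟨N, hN⟩ := hreach k
  have hkr : k = r := IsPeriodicPt.eq_of_iterate_eq_isFixedPt hki (by omega) hr hN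
  subst hkr
  exact hkj ((hr.iterate b).eq.symm.trans hkj')

theorem wellFounded_isStrictDescendant [Finite α] (hr : IsFixedPt p r)
    (hreach : ∀ i, ∃ n, p^[n] i = r) : WellFounded (IsStrictDescendant p) :=
  haveI : IsTrans α (IsStrictDescendant p) := ⟨fun _ _ _ => IsStrictDescendant.trans hr hreach⟩
  haveI : Std.Irrefl (IsStrictDescendant p) := ⟨fun _ h => h.1 rfl⟩
  Finite.wellFounded_of_trans_of_irrefl _

end Descendants

/-- Abstract form of the paper's result that the total charge on every inner
interface vanishes: for a finite tree of regions with root `r`, parent map `p`,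
positive conductivities `σ`, and total charges `C` satisfying the integrated
boundary integral equations, `C i = 0` for every non-root region `i`. -/
theorem total_charge_vanishes_on_inner_interfaces
    {ι : Type*} [Fintype ι] (r : ι) (p : ι → ι)
    (hpr : p r = r) (hreach : ∀ i, ∃ n : ℕ, p^[n] i = r)
    (σ : ι → ℝ) (hσ : ∀ i, 0 < σ i) (C : ι → ℝ)
    (heq : ∀ i, i ≠ r →
      0 = σ (p i) * C i + (σ (p i) - σ i) *
        ∑ j ∈ Finset.univ.filter (fun j => j ≠ i ∧ ∃ n : ℕ, 1 ≤ n ∧ p^[n] j = i), C j) :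
    ∀ i, i ≠ r → C i = 0 := by
  intro i
  induction i using (wellFounded_isStrictDescendant (p := p) hpr hreach).induction with
  | _ i ih =>
    intro hi
    have hsum : ∑ j ∈ Finset.univ.filter (fun j => j ≠ i ∧ ∃ n : ℕ, 1 ≤ n ∧ p^[n] j = i), C j
        = 0 := by
      refine Finset.sum_eq_zero fun j hj => ?_
      have hji : IsStrictDescendant p j i := (Finset.mem_filter.1 hj).2
      exact ih j hji fun hjr => IsFixedPt.not_isStrictDescendant hpr i (hjr ▸ hji)
    have hprod : σ (p i) * C i = 0 := by simpa [hsum] using (heq i hi).symm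
    exact (mul_eq_zero.1 hprod).resolve_left (hσ (p i)).ne'
end

section
/- Let s₁ < s₂ be real numbers, let q ∈ ℝ with q ≠ 0, and let γ₁, γ₂ ∈ ℝ. Set d = |q|, rᵢ = √(sᵢ² + q²) and θᵢ = arctan(sᵢ/d) for i = 1, 2, and let γ(s) = γ₁·(s₂ − s)/(s₂ − s₁) + γ₂·(s − s₁)/(s₂ − s₁). Then (1/(2π)) ∫_{s₁}^{s₂} log(√(s² + q²)) · γ(s) ds = (1/(2π)) · ((γ₁s₂ − γ₂s₁)/(s₂ − s₁)) · ( s₂·log r₂ − s₁·log r₁ − s₂ + s₁ + (θ₂ − θ₁)·d ) + (1/(2π)) · ((γ₂ − γ₁)/(s₂ − s₁)) · ( (r₂²/2)·(log r₂ − 1/2) − (r₁²/2)·(log r₁ − 1/2) ). -/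
/-!
The density is affine in arclength, `γ(s) = a + b s`, so the potential is a combination of the
zeroth and first moments of `log r` with `r = √(s² + d²)`. Both have elementary primitives,
`s log r − s + d arctan (s / d)` and `(r² / 2) (log r − 1 / 2)`, and the fundamental theorem of
calculus gives the formula.
-/

open Real

section LogSqrtSqAddSq

variable {d : ℝ}

lemma continuous_log_sqrt_sq_add_sq (hd : d ≠ 0) :
    Continuous fun s : ℝ => log √(s ^ 2 + d ^ 2) :=
  Continuous.log (by fun_prop) fun s => by positivity

lemma hasDerivAt_log_sqrt_sq_add_sq (hd : d ≠ 0) (x : ℝ) :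
    HasDerivAt (fun s => log √(s ^ 2 + d ^ 2)) (x / (x ^ 2 + d ^ 2)) x := by
  have hx : x ^ 2 + d ^ 2 ≠ 0 := by positivity
  rw [show (fun s => log √(s ^ 2 + d ^ 2)) = fun s => log (s ^ 2 + d ^ 2) / 2 from
    funext fun s => log_sqrt (by positivity)]
  refine ((((hasDerivAt_pow 2 x).add_const (d ^ 2)).log hx).div_const 2).congr_deriv ?_
  field_simp
  norm_num
  ring

lemma integral_log_sqrt_sq_add_sq (hd : d ≠ 0) (a b : ℝ) :
    ∫ s in a..b, log √(s ^ 2 + d ^ 2)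
      = (b * log √(b ^ 2 + d ^ 2) - b + d * arctan (b / d))
        - (a * log √(a ^ 2 + d ^ 2) - a + d * arctan (a / d)) := by
  have hF (x : ℝ) : HasDerivAt (fun s => s * log √(s ^ 2 + d ^ 2) - s + d * arctan (s / d))
      (log √(x ^ 2 + d ^ 2)) x := by
    have hx : x ^ 2 + d ^ 2 ≠ 0 := by positivity
    refine ((((hasDerivAt_id x).mul (hasDerivAt_log_sqrt_sq_add_sq hd x)).sub
      (hasDerivAt_id x)).add (((hasDerivAt_arctan (x / d)).comp x
        ((hasDerivAt_id x).div_const d)).const_mul d)).congr_deriv ?_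
    simp only [id]
    field_simp
    ring
  exact intervalIntegral.integral_eq_sub_of_hasDerivAt (fun x _ => hF x)
    ((continuous_log_sqrt_sq_add_sq hd).intervalIntegrable a b)

lemma integral_mul_log_sqrt_sq_add_sq (hd : d ≠ 0) (a b : ℝ) :
    ∫ s in a..b, s * log √(s ^ 2 + d ^ 2)
      = (b ^ 2 + d ^ 2) / 2 * (log √(b ^ 2 + d ^ 2) - 1 / 2)
        - (a ^ 2 + d ^ 2) / 2 * (log √(a ^ 2 + d ^ 2) - 1 / 2) := by
  have hF (x : ℝ) : HasDerivAt (fun s => (s ^ 2 + d ^ 2) / 2 * (log √(s ^ 2 + d ^ 2) - 1 / 2))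
      (x * log √(x ^ 2 + d ^ 2)) x := by
    have hx : x ^ 2 + d ^ 2 ≠ 0 := by positivity
    refine ((((hasDerivAt_pow 2 x).add_const (d ^ 2)).div_const 2).mul
      ((hasDerivAt_log_sqrt_sq_add_sq hd x).sub_const (1 / 2))).congr_deriv ?_
    field_simp
    norm_num
    ring
  exact intervalIntegral.integral_eq_sub_of_hasDerivAt (fun x _ => hF x)
    ((continuous_id.mul (continuous_log_sqrt_sq_add_sq hd)).intervalIntegrable a b)

end LogSqrtSqAddSq

/-- The paper's closed-form charge-line potential: the single layer potential at
the point `(0, q)` due to a linearly varying charge density on the segment from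
`(s₁, 0)` to `(s₂, 0)`. -/
theorem charge_line_potential (s₁ s₂ q γ₁ γ₂ d r₁ r₂ θ₁ θ₂ : ℝ)
    (hs : s₁ < s₂) (hq : q ≠ 0)
    (hd : d = |q|)
    (hr₁ : r₁ = Real.sqrt (s₁ ^ 2 + q ^ 2)) (hr₂ : r₂ = Real.sqrt (s₂ ^ 2 + q ^ 2))
    (hθ₁ : θ₁ = Real.arctan (s₁ / d)) (hθ₂ : θ₂ = Real.arctan (s₂ / d)) :
    (1 / (2 * π)) * ∫ s in s₁..s₂,
        Real.log (Real.sqrt (s ^ 2 + q ^ 2)) *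
          (γ₁ * (s₂ - s) / (s₂ - s₁) + γ₂ * (s - s₁) / (s₂ - s₁))
      = (1 / (2 * π)) * ((γ₁ * s₂ - γ₂ * s₁) / (s₂ - s₁)) *
          (s₂ * Real.log r₂ - s₁ * Real.log r₁ - s₂ + s₁ + (θ₂ - θ₁) * d)
        + (1 / (2 * π)) * ((γ₂ - γ₁) / (s₂ - s₁)) *
          ((r₂ ^ 2 / 2) * (Real.log r₂ - 1 / 2) - (r₁ ^ 2 / 2) * (Real.log r₁ - 1 / 2)) := by
  set a := (γ₁ * s₂ - γ₂ * s₁) / (s₂ - s₁)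
  set b := (γ₂ - γ₁) / (s₂ - s₁)
  have hd₀ : d ≠ 0 := hd ▸ abs_ne_zero.mpr hq
  have hqd : q ^ 2 = d ^ 2 := by rw [hd, sq_abs]
  have hγ (s : ℝ) : γ₁ * (s₂ - s) / (s₂ - s₁) + γ₂ * (s - s₁) / (s₂ - s₁) = a + b * s := by
    simp only [a, b]
    field_simp [sub_ne_zero.mpr hs.ne']
    ring
  have hlog := continuous_log_sqrt_sq_add_sq hd₀
  have hmoments : ∫ s in s₁..s₂, log √(s ^ 2 + d ^ 2) * (a + b * s)
      = a * (∫ s in s₁..s₂, log √(s ^ 2 + d ^ 2))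
        + b * ∫ s in s₁..s₂, s * log √(s ^ 2 + d ^ 2) := by
    rw [← intervalIntegral.integral_const_mul, ← intervalIntegral.integral_const_mul,
      ← intervalIntegral.integral_add (Continuous.intervalIntegrable (by fun_prop) _ _)
        (Continuous.intervalIntegrable (by fun_prop) _ _)]
    congr 1 with s
    ring
  simp only [hqd, hγ] at hr₁ hr₂ ⊢
  rw [hmoments, integral_log_sqrt_sq_add_sq hd₀, integral_mul_log_sqrt_sq_add_sq hd₀,
    hr₁, hr₂, hθ₁, hθ₂, sq_sqrt (by positivity), sq_sqrt (by positivity)]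
  ring
end

section
/- Let u, w : ℝ² → ℝ be twice continuously differentiable and let T : ℝ² → ℝ² be continuously differentiable with compact support. Then ∫_{ℝ²} ⟨∇(x ↦ ⟨T(x), ∇u(x)⟩), ∇w⟩ dx + ∫_{ℝ²} ⟨∇u, ∇(x ↦ ⟨T(x), ∇w(x)⟩)⟩ dx = ∫_{ℝ²} [ ⟨DT(x)(∇u(x)), ∇w(x)⟩ + ⟨DT(x)(∇w(x)), ∇u(x)⟩ − (div T)(x)·⟨∇u(x), ∇w(x)⟩ ] dx, where DT(x) denotes the total (Fréchet) derivative of T at x, div T = trace(DT), ∇ is the gradient, and ⟨·,·⟩ is the Euclidean inner product on ℝ². -/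
open MeasureTheory
open scoped RealInnerProductSpace

open InnerProductSpace Function

/-!
Put `g = ⟪∇u, ∇w⟫`. Differentiating `⟪T, ∇u⟫` and using the symmetry of the Hessian of `u`
(and likewise for `w`) gives pointwise
`⟪∇⟪T, ∇u⟫, ∇w⟫ + ⟪∇u, ∇⟪T, ∇w⟫⟫ = ⟪DT ∇u, ∇w⟫ + ⟪DT ∇w, ∇u⟫ + Dg(T)`,
and `Dg(T) + g div T = div (g • T)`. The field `g • T` is `C¹` with compact support, so its
divergence integrates to zero: the integral of its derivative vanishes, by integration by parts
against the constant function `1`.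
-/

section Support

variable {X 𝕜 F : Type*} [TopologicalSpace X] [RCLike 𝕜] [NormedAddCommGroup F]
  [InnerProductSpace 𝕜 F]

theorem HasCompactSupport.inner_left {f : X → F} (hf : HasCompactSupport f) (g : X → F) :
    HasCompactSupport fun x => inner 𝕜 (f x) (g x) :=
  hf.mono <| support_subset_iff'.2 fun x hx => by simp [notMem_support.1 hx]

theorem HasCompactSupport.inner_right (f : X → F) {g : X → F} (hg : HasCompactSupport g) :
    HasCompactSupport fun x => inner 𝕜 (f x) (g x) :=
  hg.mono <| support_subset_iff'.2 fun x hx => by simp [notMem_support.1 hx]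

end Support

section Gradient

variable {F : Type*} [NormedAddCommGroup F] [InnerProductSpace ℝ F] [CompleteSpace F]

theorem gradient_eq_toDual_symm_comp_fderiv (f : F → ℝ) :
    gradient f = (toDual ℝ F).symm ∘ fderiv ℝ f := rfl

theorem HasCompactSupport.gradient {f : F → ℝ} (hf : HasCompactSupport f) :
    HasCompactSupport (gradient f) :=
  hf.fderiv (𝕜 := ℝ) |>.comp_left (map_zero _)

theorem ContDiff.gradient {f : F → ℝ} {m n : WithTop ℕ∞} (hf : ContDiff ℝ n f) (hmn : m + 1 ≤ n) :
    ContDiff ℝ m (gradient f) :=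
  (toDual ℝ F).symm.toContinuousLinearEquiv.contDiff.comp (hf.fderiv_right hmn)

theorem inner_fderiv_gradient_apply (f : F → ℝ) (x v a : F) :
    ⟪fderiv ℝ (gradient f) x v, a⟫ = fderiv ℝ (fderiv ℝ f) x v a := by
  rw [gradient_eq_toDual_symm_comp_fderiv, LinearIsometryEquiv.comp_fderiv]
  exact toDual_symm_apply

theorem ContDiffAt.inner_fderiv_gradient_comm {f : F → ℝ} {x : F} (hf : ContDiffAt ℝ 2 f x)
    (v a : F) : ⟪fderiv ℝ (gradient f) x v, a⟫ = ⟪fderiv ℝ (gradient f) x a, v⟫ := by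
  rw [inner_fderiv_gradient_apply, inner_fderiv_gradient_apply]
  exact hf.isSymmSndFDerivAt (by simp [minSmoothness_of_isRCLikeNormedField]) v a

theorem ContDiffAt.gradient {f : F → ℝ} {x : F} {m n : WithTop ℕ∞} (hf : ContDiffAt ℝ n f x)
    (hmn : m + 1 ≤ n) : ContDiffAt ℝ m (gradient f) x :=
  (toDual ℝ F).symm.toContinuousLinearEquiv.contDiff.contDiffAt.comp x (hf.fderiv_right hmn)

theorem inner_gradient_inner_gradient {T : F → F} {u : F → ℝ} {x : F}
    (hT : DifferentiableAt ℝ T x) (hu : ContDiffAt ℝ 2 u x) (a : F) :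
    ⟪gradient (fun y => ⟪T y, gradient u y⟫) x, a⟫ =
      ⟪fderiv ℝ T x a, gradient u x⟫ + ⟪fderiv ℝ (gradient u) x (T x), a⟫ := by
  have hgu : DifferentiableAt ℝ (gradient u) x :=
    (hu.gradient (m := 1) le_rfl).differentiableAt one_ne_zero
  rw [inner_gradient_left, fderiv_inner_apply ℝ hT hgu, hu.inner_fderiv_gradient_comm,
    real_inner_comm, add_comm]

theorem inner_gradient_tangential_add {T : F → F} {u w : F → ℝ} {x : F}
    (hT : DifferentiableAt ℝ T x) (hu : ContDiffAt ℝ 2 u x) (hw : ContDiffAt ℝ 2 w x) :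
    ⟪gradient (fun y => ⟪T y, gradient u y⟫) x, gradient w x⟫ +
        ⟪gradient u x, gradient (fun y => ⟪T y, gradient w y⟫) x⟫ =
      ⟪fderiv ℝ T x (gradient u x), gradient w x⟫ + ⟪fderiv ℝ T x (gradient w x), gradient u x⟫ +
        fderiv ℝ (fun y => ⟪gradient u y, gradient w y⟫) x (T x) := by
  rw [← real_inner_comm (gradient u x), inner_gradient_inner_gradient hT hu,
    inner_gradient_inner_gradient hT hw,
    fderiv_inner_apply ℝ ((hu.gradient (m := 1) le_rfl).differentiableAt one_ne_zero)
      ((hw.gradient (m := 1) le_rfl).differentiableAt one_ne_zero),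
    ← real_inner_comm (gradient u x)]
  ring

end Gradient

section Divergence

variable {E : Type*} [NormedAddCommGroup E] [NormedSpace ℝ E] [FiniteDimensional ℝ E]

theorem trace_fderiv_smul {g : E → ℝ} {F : E → E} {x : E} (hg : DifferentiableAt ℝ g x)
    (hF : DifferentiableAt ℝ F x) :
    LinearMap.trace ℝ E (fderiv ℝ (fun y => g y • F y) x) =
      fderiv ℝ g x (F x) + g x * LinearMap.trace ℝ E (fderiv ℝ F x) := by
  rw [fderiv_fun_smul hg hF]
  simp [add_comm]

variable (E) in
noncomputable def continuousTrace : (E →L[ℝ] E) →L[ℝ] ℝ :=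
  LinearMap.toContinuousLinearMap (LinearMap.trace ℝ E ∘ₗ ContinuousLinearMap.coeLM ℝ)

@[simp]
theorem continuousTrace_apply (f : E →L[ℝ] E) : continuousTrace E f = LinearMap.trace ℝ E f :=
  rfl

end Divergence

section Integral

variable {E G : Type*} [NormedAddCommGroup E] [NormedSpace ℝ E] [NormedAddCommGroup G]
  [NormedSpace ℝ G] [MeasurableSpace E] {μ : Measure E}

theorem HasCompactSupport.integrable_fderiv [OpensMeasurableSpace E] [IsFiniteMeasureOnCompacts μ]
    {f : E → G} (hfc : HasCompactSupport f) (hf : ContDiff ℝ 1 f) : Integrable (fderiv ℝ f) μ :=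
  (hf.continuous_fderiv one_ne_zero).integrable_of_hasCompactSupport (hfc.fderiv (𝕜 := ℝ))

variable [FiniteDimensional ℝ E] [BorelSpace E] [μ.IsAddHaarMeasure]

theorem HasCompactSupport.integral_fderiv_eq_zero {f : E → G}
    (hfc : HasCompactSupport f) (hf : ContDiff ℝ 1 f) : ∫ x, fderiv ℝ f x ∂μ = 0 := by
  ext v
  rw [ContinuousLinearMap.integral_apply (hfc.integrable_fderiv hf), zero_apply]
  simpa using integral_smul_fderiv_eq_neg_fderiv_smul_of_integrable (μ := μ)
    (f := fun _ => (1 : ℝ)) (g := f) (v := v) (by simp)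
    (by simpa using (hfc.integrable_fderiv hf).apply_continuousLinearMap v)
    (by simpa using hf.continuous.integrable_of_hasCompactSupport hfc)
    (fun x _ => differentiableAt_const _) (fun x _ => (hf.differentiable one_ne_zero) x)

theorem HasCompactSupport.integral_trace_fderiv_eq_zero {F : E → E} (hFc : HasCompactSupport F)
    (hF : ContDiff ℝ 1 F) : ∫ x, LinearMap.trace ℝ E (fderiv ℝ F x) ∂μ = 0 := by
  simp_rw [← continuousTrace_apply]
  rw [(continuousTrace E).integral_comp_comm (hFc.integrable_fderiv hF),
    hFc.integral_fderiv_eq_zero hF, map_zero]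

end Integral

theorem integral_inner_gradient_tangential_add {E : Type*} [NormedAddCommGroup E]
    [InnerProductSpace ℝ E] [FiniteDimensional ℝ E] [MeasurableSpace E] [BorelSpace E]
    (μ : Measure E) [μ.IsAddHaarMeasure] {u w : E → ℝ} (hu : ContDiff ℝ 2 u) (hw : ContDiff ℝ 2 w)
    {T : E → E} (hT : ContDiff ℝ 1 T) (hTc : HasCompactSupport T) :
    (∫ x, ⟪gradient (fun x => ⟪T x, gradient u x⟫) x, gradient w x⟫ ∂μ) +
      (∫ x, ⟪gradient u x, gradient (fun x => ⟪T x, gradient w x⟫) x⟫ ∂μ) =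
    ∫ x, (⟪fderiv ℝ T x (gradient u x), gradient w x⟫ +
          ⟪fderiv ℝ T x (gradient w x), gradient u x⟫ -
          LinearMap.trace ℝ E (fderiv ℝ T x) * ⟪gradient u x, gradient w x⟫) ∂μ := by
  have hgu : ContDiff ℝ 1 (gradient u) := hu.gradient le_rfl
  have hgw : ContDiff ℝ 1 (gradient w) := hw.gradient le_rfl
  set V : E → E := fun x => ⟪gradient u x, gradient w x⟫ • T x with hV
  have hVc : HasCompactSupport V := hTc.smul_left
  have hV1 : ContDiff ℝ 1 V := (hgu.inner ℝ hgw).smul hT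
  have hpoint : ∀ x, ⟪fderiv ℝ T x (gradient u x), gradient w x⟫ +
        ⟪fderiv ℝ T x (gradient w x), gradient u x⟫ -
        LinearMap.trace ℝ E (fderiv ℝ T x) * ⟪gradient u x, gradient w x⟫ =
      ⟪gradient (fun x => ⟪T x, gradient u x⟫) x, gradient w x⟫ +
        ⟪gradient u x, gradient (fun x => ⟪T x, gradient w x⟫) x⟫ -
        LinearMap.trace ℝ E (fderiv ℝ V x) := by
    intro x
    have hTx : DifferentiableAt ℝ T x := hT.differentiable one_ne_zero x
    rw [inner_gradient_tangential_add hTx hu.contDiffAt hw.contDiffAt, hV,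
      trace_fderiv_smul ((hgu.inner ℝ hgw).differentiable one_ne_zero x) hTx]
    ring
  have hA : Integrable (fun x => ⟪gradient (fun x => ⟪T x, gradient u x⟫) x, gradient w x⟫) μ :=
    Continuous.integrable_of_hasCompactSupport
      (((hT.inner ℝ hgu).gradient (m := 0) le_rfl).continuous.inner hgw.continuous)
      ((hTc.inner_left _).gradient.inner_left _)
  have hB : Integrable (fun x => ⟪gradient u x, gradient (fun x => ⟪T x, gradient w x⟫) x⟫) μ :=
    Continuous.integrable_of_hasCompactSupport
      (hgu.continuous.inner ((hT.inner ℝ hgw).gradient (m := 0) le_rfl).continuous)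
      (HasCompactSupport.inner_right _ (hTc.inner_left _).gradient)
  have hdiv : Integrable (fun x => LinearMap.trace ℝ E (fderiv ℝ V x)) μ :=
    (continuousTrace E).integrable_comp (hVc.integrable_fderiv hV1)
  simp_rw [hpoint]
  rw [integral_sub (f := fun x => _ + _) (hA.add hB) hdiv, integral_add hA hB,
    hVc.integral_trace_fderiv_eq_zero hV1, sub_zero]

/-- Integration-by-parts commutator identity underlying the tangential
regularity argument: for `u, w : ℝ² → ℝ` twice continuously differentiable and
`T : ℝ² → ℝ²` continuously differentiable with compact support,
`∫ ⟨∇(T·∇u), ∇w⟩ + ∫ ⟨∇u, ∇(T·∇w)⟩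
  = ∫ (⟨DT ∇u, ∇w⟩ + ⟨DT ∇w, ∇u⟩ − (div T) ⟨∇u, ∇w⟩)`. -/
theorem tangential_ibp_commutator_identity
    (u w : EuclideanSpace ℝ (Fin 2) → ℝ)
    (hu : ContDiff ℝ 2 u) (hw : ContDiff ℝ 2 w)
    (T : EuclideanSpace ℝ (Fin 2) → EuclideanSpace ℝ (Fin 2))
    (hT : ContDiff ℝ 1 T) (hTc : HasCompactSupport T) :
    (∫ x, ⟪gradient (fun x => ⟪T x, gradient u x⟫) x, gradient w x⟫) +
      (∫ x, ⟪gradient u x, gradient (fun x => ⟪T x, gradient w x⟫) x⟫) =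
    ∫ x, (⟪fderiv ℝ T x (gradient u x), gradient w x⟫ +
          ⟪fderiv ℝ T x (gradient w x), gradient u x⟫ -
          (LinearMap.trace ℝ (EuclideanSpace ℝ (Fin 2)) (fderiv ℝ T x : _ →ₗ[ℝ] _)) *
            ⟪gradient u x, gradient w x⟫) :=
  integral_inner_gradient_tangential_add volume hu hw hT hTc
end
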